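/- With the notation below, the partial derivatives of F with respect to the second-order variables r, s, t satisfy the identity F_r · F_t − (1/4) · F_s² = −1/4 at every (r,s,t) ∈ ℝ³; in particular the vanishing-E₁ graph equation in the Heisenberg group is a second-order hyperbolic equation (its linearization is hyperbolic). -/

import Mathlib

/-!
Writing `Q = sθ² r − 2 sθ cθ s + cθ² t`, each partial derivative of `F` is a constant plus a
multiple of `Q`:
`F_r = sθ cθ − sθ² Q / 3`, `F_s = sθ² − cθ² + 2 sθ cθ Q / 3`, `F_t = −sθ cθ − cθ² Q / 3`.
In `F_r F_t − F_s² / 4` the terms in `Q` and `Q²` cancel, leaving `−(cθ² + sθ²)² / 4 = −1/4`.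
-/

namespace VanishingE1

/-- The quantity `Δu − cθ D_x − sθ D_y` in the derivative variables. -/
def secondOrderTerm (c σ r s t : ℝ) : ℝ :=
  σ ^ 2 * r - 2 * σ * c * s + c ^ 2 * t

noncomputable def graphOperator (c σ r s t : ℝ) : ℝ :=
  σ * (c * r + σ * (s + 1)) - c * (c * (s - 1) + σ * t)
    - (1 / 6) * secondOrderTerm c σ r s t ^ 2 - 1 / 2

lemma hasDerivAt_affine_sub_sq (a b k e z : ℝ) :
    HasDerivAt (fun w : ℝ => a * w + b - (1 / 6) * (k * w + e) ^ 2)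
      (a - (1 / 3) * k * (k * z + e)) z := by
  have hlin (m n : ℝ) : HasDerivAt (fun w : ℝ => m * w + n) m z := by
    simpa using ((hasDerivAt_id z).const_mul m).add_const n
  exact ((hlin a b).sub (((hlin k e).pow 2).const_mul (1 / 6))).congr_deriv (by norm_num; ring)

variable (c σ r s t : ℝ)

lemma hasDerivAt_graphOperator_r :
    HasDerivAt (fun r' => graphOperator c σ r' s t)
      (σ * c - (1 / 3) * σ ^ 2 * secondOrderTerm c σ r s t) r := by
  convert hasDerivAt_affine_sub_sq (σ * c)
    (σ ^ 2 * (s + 1) - c ^ 2 * (s - 1) - c * σ * t - 1 / 2) (σ ^ 2)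
    (-2 * σ * c * s + c ^ 2 * t) r using 1
  · funext w; simp only [graphOperator, secondOrderTerm]; ring
  · simp only [secondOrderTerm]; ring

lemma hasDerivAt_graphOperator_s :
    HasDerivAt (fun s' => graphOperator c σ r s' t)
      (σ ^ 2 - c ^ 2 + (2 / 3) * σ * c * secondOrderTerm c σ r s t) s := by
  convert hasDerivAt_affine_sub_sq (σ ^ 2 - c ^ 2)
    (σ * c * r + σ ^ 2 + c ^ 2 - c * σ * t - 1 / 2) (-2 * σ * c)
    (σ ^ 2 * r + c ^ 2 * t) s using 1
  · funext w; simp only [graphOperator, secondOrderTerm]; ring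
  · simp only [secondOrderTerm]; ring

lemma hasDerivAt_graphOperator_t :
    HasDerivAt (fun t' => graphOperator c σ r s t')
      (-(c * σ) - (1 / 3) * c ^ 2 * secondOrderTerm c σ r s t) t := by
  convert hasDerivAt_affine_sub_sq (-(c * σ))
    (σ * c * r + σ ^ 2 * (s + 1) - c ^ 2 * (s - 1) - 1 / 2) (c ^ 2)
    (σ ^ 2 * r - 2 * σ * c * s) t using 1
  · funext w; simp only [graphOperator, secondOrderTerm]; ring
  · simp only [secondOrderTerm]; ring

theorem deriv_r_mul_deriv_t_sub_deriv_s_sq :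
    deriv (fun r' => graphOperator c σ r' s t) r * deriv (fun t' => graphOperator c σ r s t') t
      - (1 / 4) * deriv (fun s' => graphOperator c σ r s' t) s ^ 2
      = -(1 / 4) * (c ^ 2 + σ ^ 2) ^ 2 := by
  rw [(hasDerivAt_graphOperator_r c σ r s t).deriv, (hasDerivAt_graphOperator_t c σ r s t).deriv,
    (hasDerivAt_graphOperator_s c σ r s t).deriv]
  ring

end VanishingE1

lemma div_sqrt_sq_add_div_sqrt_sq {a b D : ℝ} (hD : D = Real.sqrt (a ^ 2 + b ^ 2))
    (hDpos : 0 < D) : (a / D) ^ 2 + (b / D) ^ 2 = 1 := by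
  rw [div_pow, div_pow, ← add_div, ← Real.sq_sqrt (by positivity : 0 ≤ a ^ 2 + b ^ 2), ← hD,
    div_self (pow_ne_zero 2 hDpos.ne')]

/-- For the vanishing-E₁ graph equation in the Heisenberg group,
written as `F(r,s,t) = 0` in the second-derivative variables `(r,s,t)`, one has
`F_r · F_t − (1/4)·F_s² = −1/4` at every point, so the equation is hyperbolic. -/
theorem stmt_0 (x y p q D cθ sθ : ℝ)
    (hD : D = Real.sqrt ((p - y) ^ 2 + (q + x) ^ 2)) (hDpos : 0 < D)
    (hc : cθ = (p - y) / D) (hs : sθ = (q + x) / D)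
    (F : ℝ → ℝ → ℝ → ℝ)
    (hF : ∀ r s t : ℝ, F r s t =
      sθ * (cθ * r + sθ * (s + 1)) - cθ * (cθ * (s - 1) + sθ * t)
        - (1 / 6) * (sθ ^ 2 * r - 2 * sθ * cθ * s + cθ ^ 2 * t) ^ 2 - 1 / 2) :
    ∀ r s t : ℝ,
      deriv (fun r' => F r' s t) r * deriv (fun t' => F r s t') t
        - (1 / 4) * (deriv (fun s' => F r s' t) s) ^ 2 = -(1 / 4) := by
  have hunit : cθ ^ 2 + sθ ^ 2 = 1 := by
    rw [hc, hs]
    exact div_sqrt_sq_add_div_sqrt_sq hD hDpos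
  obtain rfl : F = VanishingE1.graphOperator cθ sθ := by
    funext r s t
    exact hF r s t
  intro r s t
  rw [VanishingE1.deriv_r_mul_deriv_t_sub_deriv_s_sq, hunit]
  norm_num
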